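/- arXiv:2010.02243 — 3 statements merged into one kernel-verified Lean document; each statement's English description precedes it below -/
import Mathlib

section
/- Let X, S1, S2 be {0,1}-valued random variables such that (1) P(S1 = S2 | X=1) = P(S1 = S2), (2) P(S_i = 1 | X=1) = P(S_i = 0 | X=0) for i = 1,2, and (3) S1 and S2 are conditionally independent given X. Then P(X=1)·P(X=0)·(1 − 2·P(S1 ≠ S2)) = E[S1·S2] − E[S1]·E[S2]. -/
open scoped BigOperators Classical

noncomputable def Pr {Ω : Type*} [Fintype Ω] (p : Ω → ℝ) (A : Ω → Prop) : ℝ :=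
  ∑ ω, if A ω then p ω else 0

noncomputable def Ex {Ω : Type*} [Fintype Ω] (p : Ω → ℝ) (f : Ω → ℝ) : ℝ :=
  ∑ ω, p ω * f ω

noncomputable def cPr {Ω : Type*} [Fintype Ω] (p : Ω → ℝ) (A B : Ω → Prop) : ℝ :=
  Pr p (fun ω => A ω ∧ B ω) / Pr p B

lemma Pr_congr {Ω : Type*} [Fintype Ω] (p : Ω → ℝ) {A B : Ω → Prop}
    (h : ∀ ω, A ω ↔ B ω) : Pr p A = Pr p B := by
  unfold Pr; apply Finset.sum_congr rfl; intro ω _; simp [h ω]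

lemma Pr_split {Ω : Type*} [Fintype Ω] (p : Ω → ℝ) (A B : Ω → Prop) :
    Pr p A = Pr p (fun ω => A ω ∧ B ω) + Pr p (fun ω => A ω ∧ ¬ B ω) := by
  unfold Pr; rw [← Finset.sum_add_distrib]
  apply Finset.sum_congr rfl; intro ω _
  by_cases hA : A ω <;> by_cases hB : B ω <;> simp [hA, hB]

lemma Ex_eq_Pr {Ω : Type*} [Fintype Ω] (p : Ω → ℝ) (S : Ω → ℝ)
    (hS : ∀ ω, S ω = 0 ∨ S ω = 1) :
    Ex p S = Pr p (fun ω => S ω = 1) := by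
  unfold Ex Pr; apply Finset.sum_congr rfl; intro ω _
  rcases hS ω with h | h <;> simp [h]

lemma Ex_mul_eq_Pr {Ω : Type*} [Fintype Ω] (p : Ω → ℝ) (S1 S2 : Ω → ℝ)
    (hS1 : ∀ ω, S1 ω = 0 ∨ S1 ω = 1) (hS2 : ∀ ω, S2 ω = 0 ∨ S2 ω = 1) :
    Ex p (fun ω => S1 ω * S2 ω) = Pr p (fun ω => S1 ω = 1 ∧ S2 ω = 1) := by
  unfold Ex Pr; apply Finset.sum_congr rfl; intro ω _
  rcases hS1 ω with h | h <;> rcases hS2 ω with h' | h' <;> simp [h, h']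

theorem stmt0 {Ω : Type*} [Fintype Ω] (p : Ω → ℝ)
    (hp : ∀ ω, 0 ≤ p ω) (hsum : ∑ ω, p ω = 1)
    (X S1 S2 : Ω → ℝ)
    (hX : ∀ ω, X ω = 0 ∨ X ω = 1)
    (hS1 : ∀ ω, S1 ω = 0 ∨ S1 ω = 1)
    (hS2 : ∀ ω, S2 ω = 0 ∨ S2 ω = 1)
    (hX0 : 0 < Pr p (fun ω => X ω = 0))
    (hX1 : 0 < Pr p (fun ω => X ω = 1))
    (h1 : cPr p (fun ω => S1 ω = S2 ω) (fun ω => X ω = 1)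
        = Pr p (fun ω => S1 ω = S2 ω))
    (h2a : cPr p (fun ω => S1 ω = 1) (fun ω => X ω = 1)
        = cPr p (fun ω => S1 ω = 0) (fun ω => X ω = 0))
    (h2b : cPr p (fun ω => S2 ω = 1) (fun ω => X ω = 1)
        = cPr p (fun ω => S2 ω = 0) (fun ω => X ω = 0))
    (h3 : ∀ a b x : ℝ,
        cPr p (fun ω => S1 ω = a ∧ S2 ω = b) (fun ω => X ω = x)
          = cPr p (fun ω => S1 ω = a) (fun ω => X ω = x)
            * cPr p (fun ω => S2 ω = b) (fun ω => X ω = x)) :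
    Pr p (fun ω => X ω = 1) * Pr p (fun ω => X ω = 0)
        * (1 - 2 * Pr p (fun ω => S1 ω ≠ S2 ω))
      = Ex p (fun ω => S1 ω * S2 ω) - Ex p S1 * Ex p S2 := by
  classical
  set x0 := Pr p (fun ω => X ω = 0) with hx0def
  set x1 := Pr p (fun ω => X ω = 1) with hx1def
  have hx0 : x0 ≠ 0 := ne_of_gt hX0
  have hx1 : x1 ≠ 0 := ne_of_gt hX1
  have hone : Pr p (fun _ : Ω => True) = 1 := by
    unfold Pr; simpa using hsum
  have hx01 : x1 + x0 = 1 := by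
    have hsp := Pr_split p (fun _ : Ω => True) (fun ω => X ω = 1)
    rw [hone] at hsp
    have e1 : Pr p (fun ω : Ω => True ∧ X ω = 1) = x1 :=
      Pr_congr p (fun ω => by simp)
    have e2 : Pr p (fun ω : Ω => True ∧ ¬ X ω = 1) = x0 :=
      Pr_congr p (fun ω => by rcases hX ω with h | h <;> simp [h])
    rw [e1, e2] at hsp; linarith
  set a := cPr p (fun ω => S1 ω = 1) (fun ω => X ω = 1) with hadef
  set b := cPr p (fun ω => S2 ω = 1) (fun ω => X ω = 1) with hbdef
  have hu1 : Pr p (fun ω => S1 ω = 1 ∧ X ω = 1) = a * x1 := by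
    rw [hadef]; unfold cPr; rw [← hx1def]; field_simp
  have hv1 : Pr p (fun ω => S2 ω = 1 ∧ X ω = 1) = b * x1 := by
    rw [hbdef]; unfold cPr; rw [← hx1def]; field_simp
  have compl1 : ∀ (S : Ω → ℝ), (∀ ω, S ω = 0 ∨ S ω = 1) → ∀ x : ℝ,
      Pr p (fun ω => S ω = 0 ∧ X ω = x)
        = Pr p (fun ω => X ω = x) - Pr p (fun ω => S ω = 1 ∧ X ω = x) := by
    intro S hS x
    have hsp := Pr_split p (fun ω => X ω = x) (fun ω => S ω = 1)
    have e1 : Pr p (fun ω => X ω = x ∧ S ω = 1) = Pr p (fun ω => S ω = 1 ∧ X ω = x) :=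
      Pr_congr p (fun ω => by tauto)
    have e2 : Pr p (fun ω => X ω = x ∧ ¬ S ω = 1) = Pr p (fun ω => S ω = 0 ∧ X ω = x) :=
      Pr_congr p (fun ω => by rcases hS ω with h | h <;> simp [h])
    rw [e1, e2] at hsp; linarith
  have hu0 : Pr p (fun ω => S1 ω = 1 ∧ X ω = 0) = (1 - a) * x0 := by
    have h := h2a
    unfold cPr at h
    beta_reduce at h
    rw [compl1 S1 hS1 0, ← hx0def] at h
    field_simp at h
    linarith
  have hv0 : Pr p (fun ω => S2 ω = 1 ∧ X ω = 0) = (1 - b) * x0 := by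
    have h := h2b
    unfold cPr at h
    beta_reduce at h
    rw [compl1 S2 hS2 0, ← hx0def] at h
    field_simp at h
    linarith
  have ca0 : cPr p (fun ω => S1 ω = 1) (fun ω => X ω = 0) = 1 - a := by
    unfold cPr; rw [hu0, ← hx0def]; field_simp
  have cb0 : cPr p (fun ω => S2 ω = 1) (fun ω => X ω = 0) = 1 - b := by
    unfold cPr; rw [hv0, ← hx0def]; field_simp
  have ca0' : cPr p (fun ω => S1 ω = 0) (fun ω => X ω = 0) = a := by
    unfold cPr; rw [compl1 S1 hS1 0, hu0, ← hx0def]; field_simp; ring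
  have cb0' : cPr p (fun ω => S2 ω = 0) (fun ω => X ω = 0) = b := by
    unfold cPr; rw [compl1 S2 hS2 0, hv0, ← hx0def]; field_simp; ring
  have ca1' : cPr p (fun ω => S1 ω = 0) (fun ω => X ω = 1) = 1 - a := by
    unfold cPr; rw [compl1 S1 hS1 1, hu1, ← hx1def]; field_simp
  have cb1' : cPr p (fun ω => S2 ω = 0) (fun ω => X ω = 1) = 1 - b := by
    unfold cPr; rw [compl1 S2 hS2 1, hv1, ← hx1def]; field_simp
  have joint : ∀ s t x : ℝ, Pr p (fun ω => X ω = x) ≠ 0 →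
      Pr p (fun ω => (S1 ω = s ∧ S2 ω = t) ∧ X ω = x)
        = cPr p (fun ω => S1 ω = s) (fun ω => X ω = x)
          * cPr p (fun ω => S2 ω = t) (fun ω => X ω = x)
          * Pr p (fun ω => X ω = x) := by
    intro s t x hx
    have step : Pr p (fun ω => (S1 ω = s ∧ S2 ω = t) ∧ X ω = x)
        = cPr p (fun ω => S1 ω = s ∧ S2 ω = t) (fun ω => X ω = x)
          * Pr p (fun ω => X ω = x) := by
      unfold cPr
      rw [div_mul_cancel₀ _ hx]
    rw [step, h3 s t x]
  -- the four "different" joints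
  have j101 : Pr p (fun ω => (S1 ω = 1 ∧ S2 ω = 0) ∧ X ω = 1) = a * (1 - b) * x1 := by
    rw [joint 1 0 1 (by rw [← hx1def]; exact hx1), ← hadef, cb1', ← hx1def]
  have j011 : Pr p (fun ω => (S1 ω = 0 ∧ S2 ω = 1) ∧ X ω = 1) = (1 - a) * b * x1 := by
    rw [joint 0 1 1 (by rw [← hx1def]; exact hx1), ca1', ← hbdef, ← hx1def]
  have j100 : Pr p (fun ω => (S1 ω = 1 ∧ S2 ω = 0) ∧ X ω = 0) = (1 - a) * b * x0 := by
    rw [joint 1 0 0 (by rw [← hx0def]; exact hx0), ca0, cb0', ← hx0def]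
  have j010 : Pr p (fun ω => (S1 ω = 0 ∧ S2 ω = 1) ∧ X ω = 0) = a * (1 - b) * x0 := by
    rw [joint 0 1 0 (by rw [← hx0def]; exact hx0), ca0', cb0, ← hx0def]
  have j111 : Pr p (fun ω => (S1 ω = 1 ∧ S2 ω = 1) ∧ X ω = 1) = a * b * x1 := by
    rw [joint 1 1 1 (by rw [← hx1def]; exact hx1), ← hadef, ← hbdef, ← hx1def]
  have j110 : Pr p (fun ω => (S1 ω = 1 ∧ S2 ω = 1) ∧ X ω = 0)
      = (1 - a) * (1 - b) * x0 := by
    rw [joint 1 1 0 (by rw [← hx0def]; exact hx0), ca0, cb0, ← hx0def]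
  -- expectations
  have eS1 : Ex p S1 = a * x1 + (1 - a) * x0 := by
    rw [Ex_eq_Pr p S1 hS1, Pr_split p (fun ω => S1 ω = 1) (fun ω => X ω = 1)]
    have e2 : Pr p (fun ω => S1 ω = 1 ∧ ¬ X ω = 1)
        = Pr p (fun ω => S1 ω = 1 ∧ X ω = 0) :=
      Pr_congr p (fun ω => by rcases hX ω with h | h <;> simp [h])
    rw [e2, hu1, hu0]
  have eS2 : Ex p S2 = b * x1 + (1 - b) * x0 := by
    rw [Ex_eq_Pr p S2 hS2, Pr_split p (fun ω => S2 ω = 1) (fun ω => X ω = 1)]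
    have e2 : Pr p (fun ω => S2 ω = 1 ∧ ¬ X ω = 1)
        = Pr p (fun ω => S2 ω = 1 ∧ X ω = 0) :=
      Pr_congr p (fun ω => by rcases hX ω with h | h <;> simp [h])
    rw [e2, hv1, hv0]
  have eS12 : Ex p (fun ω => S1 ω * S2 ω)
      = a * b * x1 + (1 - a) * (1 - b) * x0 := by
    rw [Ex_mul_eq_Pr p S1 S2 hS1 hS2,
      Pr_split p (fun ω => S1 ω = 1 ∧ S2 ω = 1) (fun ω => X ω = 1)]
    have e2 : Pr p (fun ω => (S1 ω = 1 ∧ S2 ω = 1) ∧ ¬ X ω = 1)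
        = Pr p (fun ω => (S1 ω = 1 ∧ S2 ω = 1) ∧ X ω = 0) :=
      Pr_congr p (fun ω => by rcases hX ω with h | h <;> simp [h])
    rw [e2, j111, j110]
  -- P(S1 ≠ S2)
  have hdiffx : ∀ x : ℝ,
      Pr p (fun ω => S1 ω ≠ S2 ω ∧ X ω = x)
        = Pr p (fun ω => (S1 ω = 1 ∧ S2 ω = 0) ∧ X ω = x)
          + Pr p (fun ω => (S1 ω = 0 ∧ S2 ω = 1) ∧ X ω = x) := by
    intro x
    rw [Pr_split p (fun ω => S1 ω ≠ S2 ω ∧ X ω = x) (fun ω => S1 ω = 1)]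
    have e1 : Pr p (fun ω => (S1 ω ≠ S2 ω ∧ X ω = x) ∧ S1 ω = 1)
        = Pr p (fun ω => (S1 ω = 1 ∧ S2 ω = 0) ∧ X ω = x) :=
      Pr_congr p (fun ω => by
        rcases hS1 ω with h | h <;> rcases hS2 ω with h' | h' <;>
          simp [h, h'] <;> norm_num)
    have e2 : Pr p (fun ω => (S1 ω ≠ S2 ω ∧ X ω = x) ∧ ¬ S1 ω = 1)
        = Pr p (fun ω => (S1 ω = 0 ∧ S2 ω = 1) ∧ X ω = x) :=
      Pr_congr p (fun ω => by
        rcases hS1 ω with h | h <;> rcases hS2 ω with h' | h' <;>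
          simp [h, h'] <;> norm_num)
    rw [e1, e2]
  have hD : Pr p (fun ω => S1 ω ≠ S2 ω)
      = a * (1 - b) * x1 + (1 - a) * b * x1 + (1 - a) * b * x0 + a * (1 - b) * x0 := by
    rw [Pr_split p (fun ω => S1 ω ≠ S2 ω) (fun ω => X ω = 1)]
    have e2 : Pr p (fun ω => S1 ω ≠ S2 ω ∧ ¬ X ω = 1)
        = Pr p (fun ω => S1 ω ≠ S2 ω ∧ X ω = 0) :=
      Pr_congr p (fun ω => by rcases hX ω with h | h <;> simp [h])
    rw [e2, hdiffx 1, hdiffx 0, j101, j011, j100, j010]; ring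
  rw [hD, eS1, eS2, eS12]
  have hx0e : x0 = 1 - x1 := by linarith
  rw [hx0e]; ring
end

section
/- In a decomposable error model with positive rates, if S is a random syndrome with P(S) > 0, then the derivative of the log-likelihood satisfies ∂ ln P(S) / ∂θ^i_e = P(X_i = e | S)/P(X_i = e) − P(X_i = I | S)/P(X_i = I). -/
open scoped BigOperators Classical

noncomputable def cfgProb {m : ℕ} {N : Fin m → Type*} [∀ i, Fintype (N i)]
    (θ : (i : Fin m) → N i → ℝ) (X : (i : Fin m) → Option (N i)) : ℝ :=
  ∏ i, (match X i with
    | some e => θ i e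
    | none => 1 - ∑ e', θ i e')

/-- Probability of observing the syndrome `S` under syndrome map `σ`. -/
noncomputable def synProb {m : ℕ} {N : Fin m → Type*} [∀ i, Fintype (N i)]
    {l : ℕ} (σ : ((i : Fin m) → Option (N i)) → (Fin l → ZMod 2))
    (θ : (i : Fin m) → N i → ℝ) (S : Fin l → ZMod 2) : ℝ :=
  ∑ X : (i : Fin m) → Option (N i), if σ X = S then cfgProb θ X else 0

lemma cfg_split {m : ℕ} {N : Fin m → Type*} [∀ i, Fintype (N i)]
    (θ : (i : Fin m) → N i → ℝ) (X : (i : Fin m) → Option (N i)) (i : Fin m) :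
    cfgProb θ X = (match X i with
      | some e' => θ i e'
      | none => 1 - ∑ e'', θ i e'') *
      ∏ i' ∈ Finset.univ.erase i, (match X i' with
        | some e' => θ i' e'
        | none => 1 - ∑ e'', θ i' e'') := by
  rw [cfgProb, ← Finset.mul_prod_erase _ _ (Finset.mem_univ i)]

/-- Derivative of the log-likelihood of a syndrome in a decomposable model:
`∂ ln P(S)/∂θ^i_e = P(X_i = e | S)/P(X_i = e) − P(X_i = I | S)/P(X_i = I)`. -/
theorem stmt9 {m : ℕ} {N : Fin m → Type*} [∀ i, Fintype (N i)]
    [∀ i, DecidableEq (N i)]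
    {l : ℕ} (σ : ((i : Fin m) → Option (N i)) → (Fin l → ZMod 2))
    (θ : (i : Fin m) → N i → ℝ)
    (hpos : ∀ i (e : N i), 0 < θ i e) (hposI : ∀ i, 0 < 1 - ∑ e', θ i e')
    (S : Fin l → ZMod 2) (hS : 0 < synProb σ θ S)
    (i : Fin m) (e : N i) :
    HasDerivAt
      (fun t : ℝ =>
        Real.log (synProb σ (Function.update θ i (Function.update (θ i) e t)) S))
      (((∑ X : (i : Fin m) → Option (N i),
            if σ X = S ∧ X i = some e then cfgProb θ X else 0) / synProb σ θ S) / θ i e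
        - ((∑ X : (i : Fin m) → Option (N i),
            if σ X = S ∧ X i = none then cfgProb θ X else 0) / synProb σ θ S)
            / (1 - ∑ e', θ i e'))
      (θ i e) := by
  classical
  have hθne : θ i e ≠ 0 := (hpos i e).ne'
  have hsne : (1 - ∑ e', θ i e') ≠ 0 := (hposI i).ne'
  have hPne : synProb σ θ S ≠ 0 := hS.ne'
  have hf : HasDerivAt
      (fun t : ℝ => synProb σ (Function.update θ i (Function.update (θ i) e t)) S)
      ((∑ X : (i : Fin m) → Option (N i),
          if σ X = S ∧ X i = some e then cfgProb θ X else 0) / θ i e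
        - (∑ X : (i : Fin m) → Option (N i),
          if σ X = S ∧ X i = none then cfgProb θ X else 0) / (1 - ∑ e', θ i e'))
      (θ i e) := by
    have key : HasDerivAt
        (fun t : ℝ => ∑ X : (i : Fin m) → Option (N i),
          (if σ X = S then cfgProb (Function.update θ i (Function.update (θ i) e t)) X else 0))
        (∑ X : (i : Fin m) → Option (N i),
          ((if σ X = S ∧ X i = some e then cfgProb θ X / θ i e else 0)
            - (if σ X = S ∧ X i = none then cfgProb θ X / (1 - ∑ e', θ i e') else 0)))
        (θ i e) := by
      apply HasDerivAt.fun_sum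
      intro X _
      by_cases hσ : σ X = S
      · simp only [hσ, if_true, true_and]
        have hsplit : ∀ t : ℝ, cfgProb (Function.update θ i (Function.update (θ i) e t)) X
            = (match X i with
                | some e' => Function.update (θ i) e t e'
                | none => 1 - ∑ e'', Function.update (θ i) e t e'') *
              ∏ i' ∈ Finset.univ.erase i, (match X i' with
                | some e' => θ i' e'
                | none => 1 - ∑ e'', θ i' e'') := by
          intro t
          rw [cfg_split _ X i]
          congr 1
          · cases X i <;> simp
          · refine Finset.prod_congr rfl fun j hj => ?_
            have hji : j ≠ i := Finset.ne_of_mem_erase hj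
            cases X j <;> simp [Function.update_of_ne hji]
        have hcfg : cfgProb θ X = (match X i with
              | some e' => θ i e'
              | none => 1 - ∑ e'', θ i e'') *
            ∏ i' ∈ Finset.univ.erase i, (match X i' with
              | some e' => θ i' e'
              | none => 1 - ∑ e'', θ i' e'') := cfg_split θ X i
        set C := ∏ i' ∈ Finset.univ.erase i, (match X i' with
              | some e' => θ i' e'
              | none => 1 - ∑ e'', θ i' e'') with hC
        simp only [hsplit]
        cases hXi : X i with
        | none =>
          simp only [hXi] at hcfg ⊢
          have hdiv : cfgProb θ X / (1 - ∑ e', θ i e') = C := by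
            rw [hcfg]; exact mul_div_cancel_left₀ _ hsne
          have hD : HasDerivAt
              (fun t : ℝ => (1 - (t + ∑ e'' ∈ Finset.univ \ {e}, θ i e'')) * C)
              (-C) (θ i e) := by
            simpa using (((hasDerivAt_id (θ i e)).add_const
              (∑ e'' ∈ Finset.univ \ {e}, θ i e'')).const_sub 1).mul_const C
          simp only [Finset.sum_update_of_mem (Finset.mem_univ e)]
          simpa [hdiv] using hD
        | some e' =>
          simp only [hXi] at hcfg ⊢
          by_cases he : e' = e
          · subst he
            have hdiv : cfgProb θ X / θ i e' = C := by
              rw [hcfg]; exact mul_div_cancel_left₀ _ hθne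
            simp only [Function.update_self]
            simpa [hdiv] using (hasDerivAt_id (θ i e')).mul_const C
          · simp only [Function.update_of_ne he]
            simpa [he] using hasDerivAt_const (θ i e) (θ i e' * C)
      · simp only [hσ, if_neg, false_and, if_false]
        simpa using hasDerivAt_const (θ i e) (0 : ℝ)
    have hval : (∑ X : (i : Fin m) → Option (N i),
          ((if σ X = S ∧ X i = some e then cfgProb θ X / θ i e else 0)
            - (if σ X = S ∧ X i = none then cfgProb θ X / (1 - ∑ e', θ i e') else 0)))
        = (∑ X : (i : Fin m) → Option (N i),
            if σ X = S ∧ X i = some e then cfgProb θ X else 0) / θ i e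
          - (∑ X : (i : Fin m) → Option (N i),
            if σ X = S ∧ X i = none then cfgProb θ X else 0) / (1 - ∑ e', θ i e') := by
      rw [Finset.sum_sub_distrib, Finset.sum_div, Finset.sum_div]
      congr 1 <;> refine Finset.sum_congr rfl fun X _ => ?_ <;> split_ifs <;> simp
    rw [← hval]
    exact key
  have hfx : synProb σ (Function.update θ i (Function.update (θ i) e (θ i e))) S
      = synProb σ θ S := by
    simp [Function.update_eq_self]
  have hlog := hf.log (by simpa [hfx] using hPne)
  convert hlog using 1
  rw [hfx]
  ring
end

section
/- With the setup of a perfect single-error-correcting code, fixed qubit q̂, fixed ê ∈ P_1, fixed syndrome S* ≠ 0, define K_w = {E ∈ P_n : E_{q̂} = ê, wt(E_{−q̂}) = w, S(E) = S*} and let L_w be the set of errors E with E_{q̂} = ê, wt(E_{−q̂}) = w−1 that admit an ê^(q̂)-extension (an S*-modification E* with wt(E*_{−q̂}) = w and E*_{q̂} = ê). Then |L_w| = w·|K_w| for all 1 ≤ w ≤ n−1. -/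
open scoped BigOperators Classical

/-- The weight of an error away from the fixed qubit `q̂`. -/
def wtAway {n : ℕ} (qhat : Fin n) (E : Fin n → ZMod 2 × ZMod 2) : ℕ :=
  (Finset.univ.filter (fun i : Fin n => i ≠ qhat ∧ E i ≠ 0)).card

private lemma erase_congr_aux {n : ℕ} (qhat q : Fin n)
    (E F : Fin n → ZMod 2 × ZMod 2) (h : ∀ j, j ≠ q → E j = F j) :
    (Finset.univ.filter (fun i : Fin n => i ≠ qhat ∧ E i ≠ 0)).erase q
      = (Finset.univ.filter (fun i : Fin n => i ≠ qhat ∧ F i ≠ 0)).erase q := by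
  ext j
  simp only [Finset.mem_erase, Finset.mem_filter, Finset.mem_univ, true_and]
  constructor
  · rintro ⟨hjq, hj1, hj2⟩
    exact ⟨hjq, hj1, by rw [← h j hjq]; exact hj2⟩
  · rintro ⟨hjq, hj1, hj2⟩
    exact ⟨hjq, hj1, by rw [h j hjq]; exact hj2⟩

/-- For a perfect single-error-correcting code:  with
`K_w = {E : E_{q̂} = ê, wt(E_{−q̂}) = w, S(E) = S*}` and `L_w` the set of errors with
`E_{q̂} = ê`, `wt(E_{−q̂}) = w − 1` that admit an `ê^{(q̂)}`-extension (an
`S*`-modification `E* = E + e^{(q)}` with `wt(E*_{−q̂}) = w` and `E*_{q̂} = ê`),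
one has `|L_w| = w·|K_w|`. -/
theorem stmt12 (n l : ℕ)
    (S : (Fin n → ZMod 2 × ZMod 2) →+ (Fin l → ZMod 2))
    (hperfect : Set.BijOn S
      {E | ∃ (i : Fin n) (a : ZMod 2 × ZMod 2), a ≠ 0 ∧ E = Pi.single i a}
      {v | v ≠ 0})
    (qhat : Fin n) (ehat : ZMod 2 × ZMod 2)
    (Sstar : Fin l → ZMod 2) (hSstar : Sstar ≠ 0)
    (w : ℕ) (hw1 : 1 ≤ w) (hwn : w ≤ n - 1) :
    (Finset.univ.filter (fun E : Fin n → ZMod 2 × ZMod 2 =>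
        E qhat = ehat ∧ wtAway qhat E = w - 1 ∧
        ∃ (q : Fin n) (a : ZMod 2 × ZMod 2),
          S (E + (Pi.single q a : Fin n → ZMod 2 × ZMod 2)) = Sstar ∧
          (E + (Pi.single q a : Fin n → ZMod 2 × ZMod 2)) qhat = ehat ∧
          wtAway qhat (E + (Pi.single q a : Fin n → ZMod 2 × ZMod 2)) = w)).card
      = w * (Finset.univ.filter (fun E : Fin n → ZMod 2 × ZMod 2 =>
          E qhat = ehat ∧ wtAway qhat E = w ∧ S E = Sstar)).card := by
  classical
  set Kw := Finset.univ.filter (fun E : Fin n → ZMod 2 × ZMod 2 =>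
      E qhat = ehat ∧ wtAway qhat E = w ∧ S E = Sstar) with hKw
  set Lw := Finset.univ.filter (fun E : Fin n → ZMod 2 × ZMod 2 =>
        E qhat = ehat ∧ wtAway qhat E = w - 1 ∧
        ∃ (q : Fin n) (a : ZMod 2 × ZMod 2),
          S (E + (Pi.single q a : Fin n → ZMod 2 × ZMod 2)) = Sstar ∧
          (E + (Pi.single q a : Fin n → ZMod 2 × ZMod 2)) qhat = ehat ∧
          wtAway qhat (E + (Pi.single q a : Fin n → ZMod 2 × ZMod 2)) = w) with hLw
  set T := Kw.sigma (fun F => Finset.univ.filter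
      (fun i : Fin n => i ≠ qhat ∧ F i ≠ 0)) with hT
  have hTcard : T.card = w * Kw.card := by
    have hconst : ∀ F ∈ Kw, (Finset.univ.filter
        (fun i : Fin n => i ≠ qhat ∧ F i ≠ 0)).card = w := by
      intro F hF
      rw [hKw, Finset.mem_filter] at hF
      exact hF.2.2.1
    rw [hT, Finset.card_sigma, Finset.sum_congr rfl hconst, Finset.sum_const,
      smul_eq_mul, mul_comm]
  rw [← hTcard]
  -- bijection T → Lw : (F, i) ↦ F with i-th component zeroed
  refine (Finset.card_bij (fun p _ => Function.update p.1 p.2 0) ?_ ?_ ?_).symm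
  · -- maps to Lw
    rintro ⟨F, i⟩ hp
    rw [hT, Finset.mem_sigma, hKw, Finset.mem_filter, Finset.mem_filter] at hp
    obtain ⟨⟨-, hFq, hFw, hFS⟩, -, hiq, hFi⟩ := hp
    dsimp only at hFq hFw hFS hiq hFi ⊢
    have hEF : Function.update F i 0 + (Pi.single i (F i) : Fin n → ZMod 2 × ZMod 2) = F := by
      funext j
      by_cases hj : j = i
      · subst hj; simp [Function.update_self, Pi.single_eq_same]
      · simp [Function.update_of_ne hj, Pi.single_eq_of_ne hj]
    have hwt : wtAway qhat (Function.update F i 0) = w - 1 := by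
      have hset : (Finset.univ.filter
          (fun j : Fin n => j ≠ qhat ∧ Function.update F i 0 j ≠ 0))
          = (Finset.univ.filter (fun j : Fin n => j ≠ qhat ∧ F j ≠ 0)).erase i := by
        ext j
        simp only [Finset.mem_erase, Finset.mem_filter, Finset.mem_univ, true_and]
        by_cases hj : j = i
        · subst hj; simp [Function.update_self]
        · simp [Function.update_of_ne hj, hj]
      have hmem : i ∈ Finset.univ.filter (fun j : Fin n => j ≠ qhat ∧ F j ≠ 0) := by
        simp only [Finset.mem_filter, Finset.mem_univ, true_and]
        exact ⟨hiq, hFi⟩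
      have hFw' : (Finset.univ.filter (fun j : Fin n => j ≠ qhat ∧ F j ≠ 0)).card = w := hFw
      rw [wtAway, hset, Finset.card_erase_of_mem hmem, hFw']
    rw [hLw, Finset.mem_filter]
    refine ⟨Finset.mem_univ _, ?_, hwt, i, F i, ?_, ?_, ?_⟩
    · rw [Function.update_of_ne (Ne.symm hiq)]
      exact hFq
    · rw [hEF]; exact hFS
    · rw [hEF]; exact hFq
    · rw [hEF]; exact hFw
  · -- injective
    rintro ⟨F, i⟩ hp ⟨F', i'⟩ hp' heq
    rw [hT, Finset.mem_sigma, hKw, Finset.mem_filter, Finset.mem_filter] at hp hp'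
    obtain ⟨⟨-, hFq, hFw, hFS⟩, -, hiq, hFi⟩ := hp
    obtain ⟨⟨-, hFq', hFw', hFS'⟩, -, hiq', hFi'⟩ := hp'
    dsimp only at hFq hFw hFS hiq hFi hFq' hFw' hFS' hiq' hFi' heq
    set E := Function.update F i 0 with hE
    have hEF : F = E + (Pi.single i (F i) : Fin n → ZMod 2 × ZMod 2) := by
      funext j
      by_cases hj : j = i
      · subst hj; simp [hE, Function.update_self, Pi.single_eq_same]
      · simp [hE, Function.update_of_ne hj, Pi.single_eq_of_ne hj]
    have hEF' : F' = E + (Pi.single i' (F' i') : Fin n → ZMod 2 × ZMod 2) := by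
      have hEeq : E = Function.update F' i' 0 := heq
      funext j
      by_cases hj : j = i'
      · subst hj; simp [hEeq, Function.update_self, Pi.single_eq_same]
      · simp [hEeq, Function.update_of_ne hj, Pi.single_eq_of_ne hj]
    have hkey : S (Pi.single i (F i) : Fin n → ZMod 2 × ZMod 2)
        = S (Pi.single i' (F' i') : Fin n → ZMod 2 × ZMod 2) := by
      have h1 : S E + S (Pi.single i (F i) : Fin n → ZMod 2 × ZMod 2) = Sstar := by
        rw [← map_add, ← hEF]; exact hFS
      have h2 : S E + S (Pi.single i' (F' i') : Fin n → ZMod 2 × ZMod 2) = Sstar := by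
        rw [← map_add, ← hEF']; exact hFS'
      exact add_left_cancel (h1.trans h2.symm)
    have hmem : (Pi.single i (F i) : Fin n → ZMod 2 × ZMod 2)
        ∈ {E : Fin n → ZMod 2 × ZMod 2 |
           ∃ (j : Fin n) (a : ZMod 2 × ZMod 2), a ≠ 0 ∧ E = Pi.single j a} :=
      ⟨i, F i, hFi, rfl⟩
    have hmem' : (Pi.single i' (F' i') : Fin n → ZMod 2 × ZMod 2)
        ∈ {E : Fin n → ZMod 2 × ZMod 2 |
           ∃ (j : Fin n) (a : ZMod 2 × ZMod 2), a ≠ 0 ∧ E = Pi.single j a} :=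
      ⟨i', F' i', hFi', rfl⟩
    have hsingle : (Pi.single i (F i) : Fin n → ZMod 2 × ZMod 2)
        = Pi.single i' (F' i') := hperfect.injOn hmem hmem' hkey
    have hii' : i = i' := by
      by_contra hne
      have hc := congrFun hsingle i
      rw [Pi.single_eq_same, Pi.single_eq_of_ne hne] at hc
      exact hFi hc
    subst hii'
    have hFF' : F = F' := by rw [hEF, hEF', hsingle]
    subst hFF'
    rfl
  · -- surjective
    intro E hE
    rw [hLw, Finset.mem_filter] at hE
    obtain ⟨-, hEq, hEw, q, a, hS1, hS2, hS3⟩ := hE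
    set F := E + (Pi.single q a : Fin n → ZMod 2 × ZMod 2) with hF
    have ha : a ≠ 0 := by
      intro h
      have hFE : F = E := by rw [hF, h]; simp
      rw [hFE] at hS3
      have := hEw.symm.trans hS3
      omega
    have hqqhat : q ≠ qhat := by
      intro h
      have hsame : wtAway qhat F = wtAway qhat E := by
        unfold wtAway
        congr 1
        ext j
        simp only [Finset.mem_filter, Finset.mem_univ, true_and, and_congr_right_iff]
        intro hj1
        have hjq : j ≠ q := by rw [h]; exact hj1
        rw [hF]
        simp [Pi.single_eq_of_ne hjq]
      have : w - 1 = w := by rw [← hEw, ← hsame, hS3]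
      omega
    have hFq : F q = E q + a := by rw [hF]; simp [Pi.single_eq_same]
    have herase := erase_congr_aux qhat q E F (by
      intro j hj
      rw [hF]
      simp [Pi.single_eq_of_ne hj])
    have hEq0 : E q = 0 := by
      by_contra hEq0
      have hqE : q ∈ Finset.univ.filter (fun i : Fin n => i ≠ qhat ∧ E i ≠ 0) := by
        simp only [Finset.mem_filter, Finset.mem_univ, true_and]
        exact ⟨hqqhat, hEq0⟩
      have hcE : (Finset.univ.filter (fun i : Fin n => i ≠ qhat ∧ E i ≠ 0)).card = w - 1 := hEw
      have hcF : (Finset.univ.filter (fun i : Fin n => i ≠ qhat ∧ F i ≠ 0)).card = w := hS3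
      have h1 : ((Finset.univ.filter (fun i : Fin n => i ≠ qhat ∧ E i ≠ 0)).erase q).card
          = w - 1 - 1 := by rw [Finset.card_erase_of_mem hqE, hcE]
      have hge : 1 ≤ w - 1 := by
        have := Finset.card_pos.mpr ⟨q, hqE⟩
        omega
      have h2 : ((Finset.univ.filter (fun i : Fin n => i ≠ qhat ∧ F i ≠ 0)).card - 1)
          ≤ ((Finset.univ.filter (fun i : Fin n => i ≠ qhat ∧ F i ≠ 0)).erase q).card :=
        Finset.pred_card_le_card_erase
      rw [herase] at h1
      omega
    have hFq0 : F q ≠ 0 := by rw [hFq, hEq0, zero_add]; exact ha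
    refine ⟨⟨F, q⟩, ?_, ?_⟩
    · rw [hT, Finset.mem_sigma, hKw, Finset.mem_filter]
      refine ⟨⟨Finset.mem_univ _, hS2, hS3, hS1⟩, ?_⟩
      simp only [Finset.mem_filter, Finset.mem_univ, true_and]
      exact ⟨hqqhat, hFq0⟩
    · show Function.update F q 0 = E
      funext j
      by_cases hj : j = q
      · subst hj
        rw [Function.update_self, hEq0]
      · rw [Function.update_of_ne hj, hF]
        simp [Pi.single_eq_of_ne hj]
end
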